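/- arXiv:2602.14586 — 2 statements merged into one kernel-verified Lean document; each statement's English description precedes it below -/
import Mathlib

section
/- If S is a 2-dimensional totally isotropic subspace of F^8 with S ∩ U_1 = 0 and S ∩ U_2 = 0, then, under the right action of GL_4(F) × F^× via e, S lies either in the orbit of span{e_1+f_3, e_2+f_4} or in the orbit of span{e_1−f_2, e_2+f_1}; moreover these two subspaces lie in distinct orbits. Hence the 2-dimensional totally isotropic subspaces meeting both U_1 and U_2 trivially form exactly two orbits. -/
/-!
Statement 7: If S is a 2-dimensional totally isotropic subspace of F⁸ with
S ∩ U₁ = 0 and S ∩ U₂ = 0, then, under the right action of GL₄(F) × F^× via e, S lies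
either in the orbit of span{e₁+f₃, e₂+f₄} or in the orbit of span{e₁−f₂, e₂+f₁};
moreover these two subspaces lie in distinct orbits. Hence the 2-dimensional totally
isotropic subspaces meeting both U₁ and U₂ trivially form exactly two orbits.
-/

open Matrix

variable (F : Type*) [Field F]

def Ip (n : ℕ) : Matrix (Fin n) (Fin n) F :=
  Matrix.of fun i j => if (i : ℕ) + (j : ℕ) = n - 1 then 1 else 0

def B8 (v w : Fin 8 → F) : F := v ⬝ᵥ ((Ip F 8) *ᵥ w)

def TotallyIsotropic (S : Submodule F (Fin 8 → F)) : Prop :=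
  ∀ v ∈ S, ∀ w ∈ S, B8 F v w = 0

/-- `e(r,a) = block-diag(r, a·I'₄·ᵀr⁻¹·I'₄)`. -/
noncomputable def emap (r : Matrix (Fin 4) (Fin 4) F) (a : F) : Matrix (Fin 8) (Fin 8) F :=
  Matrix.of fun i j =>
    if hi : (i : ℕ) < 4 then
      if hj : (j : ℕ) < 4 then r ⟨(i : ℕ), hi⟩ ⟨(j : ℕ), hj⟩ else 0
    else
      if hj : (j : ℕ) < 4 then 0
      else
        a * (Ip F 4 * r⁻¹ᵀ * Ip F 4)
          ⟨(i : ℕ) - 4, by have := i.isLt; omega⟩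
          ⟨(j : ℕ) - 4, by have := j.isLt; omega⟩

noncomputable def SameOrbit (S T : Submodule F (Fin 8 → F)) : Prop :=
  ∃ (r : Matrix (Fin 4) (Fin 4) F) (a : F), r.det ≠ 0 ∧ a ≠ 0 ∧
    Submodule.map (Matrix.vecMulLinear (emap F r a)) S = T

/- Standard basis vectors of F⁸, labelled e₁,e₂,e₃,e₄,f₄,f₃,f₂,f₁ in this order. -/
def e1 : Fin 8 → F := Pi.single (0 : Fin 8) (1 : F)
def e2 : Fin 8 → F := Pi.single (1 : Fin 8) (1 : F)
def e3 : Fin 8 → F := Pi.single (2 : Fin 8) (1 : F)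
def e4 : Fin 8 → F := Pi.single (3 : Fin 8) (1 : F)
def f4 : Fin 8 → F := Pi.single (4 : Fin 8) (1 : F)
def f3 : Fin 8 → F := Pi.single (5 : Fin 8) (1 : F)
def f2 : Fin 8 → F := Pi.single (6 : Fin 8) (1 : F)
def f1 : Fin 8 → F := Pi.single (7 : Fin 8) (1 : F)

def U1 : Submodule F (Fin 8 → F) := Submodule.span F {e1 F, e2 F, e3 F, e4 F}
def U2 : Submodule F (Fin 8 → F) := Submodule.span F {f1 F, f2 F, f3 F, f4 F}

/-- `span{e₁ + f₃, e₂ + f₄}` -/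
def repA : Submodule F (Fin 8 → F) := Submodule.span F {e1 F + f3 F, e2 F + f4 F}

/-- `span{e₁ − f₂, e₂ + f₁}` -/
def repB : Submodule F (Fin 8 → F) := Submodule.span F {e1 F - f2 F, e2 F + f1 F}

/-!
Write `x_v = ePart v` and `y_v = fPart v` for the coordinates of `v ∈ F⁸` along `e₁, …, e₄` and
`f₁, …, f₄`. Then `B(v, w) = β(v, w) + β(w, v)` with `β(v, w) = x_v ⬝ y_w` (`crossPairing`), and
`e(r, a)` acts by `x ↦ x r`, `y ↦ a r⁻¹ y`, so it multiplies `β` by `a`. On a totally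
isotropic plane `S` the form `β` is alternating (`char F ≠ 2`), and `S ∩ U₁ = S ∩ U₂ = 0` makes
both coordinate maps injective on `S`. For a basis `u₀, u₁` of `S`, take `r` with first rows
`x_{u₀}, x_{u₁}`. If `β = 0` on `S`, let `r⁻¹` have columns a dual pair to these rows followed by
`y_{u₀}, y_{u₁}`: then `e(r, 1)` moves `span{e₁+f₃, e₂+f₄}` onto `S`. If `b = β(u₀, u₁) ≠ 0`,
let the columns be `b⁻¹ y_{u₁}, -b⁻¹ y_{u₀}` followed by a basis of the annihilator of the rows:
then `e(r, b)` moves `span{e₁−f₂, e₂+f₁}` onto `S`. Since `β` vanishes on the first plane but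
not on the second, the two orbits are distinct.
-/

section

variable {F}

lemma Fin.castAdd_ne_natAdd {m n : ℕ} (i : Fin m) (j : Fin n) :
    Fin.castAdd n i ≠ Fin.natAdd m j :=
  Fin.ne_of_val_ne (by simp only [Fin.val_castAdd, Fin.val_natAdd]; omega)

lemma exists_linearIndependent_extend_castAdd {V : Type*} [AddCommGroup V] [Module F V]
    [FiniteDimensional F V] {m : ℕ} {x : Fin m → V} (hx : LinearIndependent F x) :
    ∀ n, m + n ≤ Module.finrank F V →
      ∃ y : Fin (m + n) → V, LinearIndependent F y ∧ ∀ i, y (Fin.castAdd n i) = x i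
  | 0, _ => ⟨x, hx, fun _ => rfl⟩
  | n + 1, h => by
    obtain ⟨y, hy, hyx⟩ := exists_linearIndependent_extend_castAdd hx n (by omega)
    obtain ⟨z, hz⟩ := exists_linearIndependent_snoc_of_lt_finrank hy (by omega)
    exact ⟨Fin.snoc y z, hz, fun i => (Fin.snoc_castSucc (α := fun _ => V) _ _ _).trans (hyx i)⟩

/-- `a` and `c` are the columns of the inverse of an invertible matrix whose first rows are `x`. -/
lemma exists_dual_and_annihilator {m n : ℕ} {x : Fin m → Fin (m + n) → F}
    (hx : LinearIndependent F x) :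
    ∃ (a : Fin m → Fin (m + n) → F) (c : Fin n → Fin (m + n) → F),
      (∀ i j, x i ⬝ᵥ a j = if i = j then 1 else 0) ∧ (∀ i j, x i ⬝ᵥ c j = 0) ∧
        LinearIndependent F c := by
  obtain ⟨y, hy, hyx⟩ := exists_linearIndependent_extend_castAdd hx n (by simp)
  have hP : IsUnit (Matrix.of y) := linearIndependent_rows_iff_isUnit.mp hy
  have hdual (i : Fin m) (k : Fin (m + n)) :
      x i ⬝ᵥ (Matrix.of y)⁻¹.col k = (1 : Matrix _ _ F) (Fin.castAdd n i) k := by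
    rw [← mul_nonsing_inv _ ((isUnit_iff_isUnit_det _).mp hP), Matrix.mul_apply', ← hyx i]
    rfl
  refine ⟨fun j => (Matrix.of y)⁻¹.col (Fin.castAdd n j),
    fun j => (Matrix.of y)⁻¹.col (Fin.natAdd m j), fun i j => ?_, fun i j => ?_, ?_⟩
  · simp [hdual, Matrix.one_apply, Fin.castAdd_inj]
  · simp [hdual, Fin.castAdd_ne_natAdd]
  · exact (linearIndependent_cols_iff_isUnit.mpr (isUnit_nonsing_inv_iff.mpr hP)).comp _
      (Fin.natAdd_injective n m)

lemma linearIndependent_append_of_dotProduct {ι : Type*} [Fintype ι] {m n : ℕ}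
    {x a : Fin m → ι → F} {c : Fin n → ι → F}
    (hxa : ∀ i j, x i ⬝ᵥ a j = if i = j then 1 else 0) (hxc : ∀ i j, x i ⬝ᵥ c j = 0)
    (hc : LinearIndependent F c) : LinearIndependent F (Fin.append a c) := by
  rw [Fintype.linearIndependent_iff]
  intro g hg
  have hga (i : Fin m) : g (Fin.castAdd n i) = 0 := by
    simpa [dotProduct_sum, Fin.sum_univ_add, hxa, hxc] using congr_arg (x i ⬝ᵥ ·) hg
  have hgc (j : Fin n) : g (Fin.natAdd m j) = 0 := by
    rw [Fin.sum_univ_add] at hg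
    simp only [hga, Fin.append_left, Fin.append_right, zero_smul, Finset.sum_const_zero,
      zero_add] at hg
    exact Fintype.linearIndependent_iff.mp hc _ hg j
  intro k
  induction k using Fin.addCases with
  | left i => exact hga i
  | right j => exact hgc j

lemma vecMul_transpose_append_eq_single {m n : ℕ}
    {x a : Fin m → Fin (m + n) → F} {c : Fin n → Fin (m + n) → F}
    (hxa : ∀ i j, x i ⬝ᵥ a j = if i = j then 1 else 0) (hxc : ∀ i j, x i ⬝ᵥ c j = 0)
    (i : Fin m) : x i ᵥ* (Matrix.of (Fin.append a c))ᵀ = Pi.single (Fin.castAdd n i) 1 := by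
  ext k
  induction k using Fin.addCases with
  | left j =>
    simp [vecMul_transpose, mulVec, dotProduct_comm _ (x i), hxa, Pi.single_apply,
      Fin.castAdd_inj, eq_comm]
  | right j =>
    simp [vecMul_transpose, mulVec, dotProduct_comm _ (x i), hxc,
      (Fin.castAdd_ne_natAdd _ _).symm]

lemma linearIndependent_pair_single {ι : Type*} [DecidableEq ι] {i j : ι} (hij : i ≠ j)
    {a b : F} (ha : a ≠ 0) (hb : b ≠ 0) :
    LinearIndependent F ![(Pi.single i a : ι → F), Pi.single j b] := by
  refine LinearIndependent.pair_iff.mpr fun s t hst => ⟨?_, ?_⟩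
  · simpa [hij, ha] using congr_fun hst i
  · simpa [hij.symm, hb] using congr_fun hst j

lemma exists_linearIndependent_span_range_eq {V : Type*} [AddCommGroup V] [Module F V]
    [FiniteDimensional F V] {S : Submodule F V} {n : ℕ} (h : Module.finrank F S = n) :
    ∃ u : Fin n → V, LinearIndependent F u ∧ Submodule.span F (Set.range u) = S := by
  let b := Module.finBasisOfFinrankEq F S h
  refine ⟨S.subtype ∘ b, b.linearIndependent.map' S.subtype S.ker_subtype, ?_⟩
  rw [Set.range_comp, ← Submodule.map_span, b.span_eq, Submodule.map_subtype_top]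

lemma Ip_apply (n : ℕ) (i j : Fin n) : Ip F n i j = if i.rev = j then 1 else 0 := by
  simp only [Ip, Matrix.of_apply, Fin.ext_iff, Fin.val_rev]
  congr 1
  apply propext
  omega

lemma Ip_mulVec (n : ℕ) (w : Fin n → F) : Ip F n *ᵥ w = fun i => w i.rev := by
  ext i
  simp [mulVec, dotProduct, Ip_apply]

lemma Ip_mul_mul_Ip_apply (n : ℕ) (M : Matrix (Fin n) (Fin n) F) (i j : Fin n) :
    (Ip F n * M * Ip F n) i j = M i.rev j.rev := by
  have hrev (k : Fin n) : i = k.rev ↔ k = i.rev := by rw [eq_comm, Fin.rev_eq_iff]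
  simp [Matrix.mul_apply, Ip_apply, Fin.rev_eq_iff, hrev]

def ePart : (Fin 8 → F) →ₗ[F] Fin 4 → F := LinearMap.funLeft F F (Fin.castAdd 4)

/-- `f_{i+1}` sits at the position mirror to that of `e_{i+1}`. -/
def fPart : (Fin 8 → F) →ₗ[F] Fin 4 → F :=
  LinearMap.funLeft F F fun i => (Fin.castAdd 4 i).rev

lemma ePart_apply (v : Fin 8 → F) (i : Fin 4) : ePart v i = v (Fin.castAdd 4 i) := rfl

lemma fPart_apply (v : Fin 8 → F) (i : Fin 4) : fPart v i = v (Fin.castAdd 4 i).rev := rfl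

lemma eq_of_ePart_eq_of_fPart_eq {v w : Fin 8 → F} (he : ePart v = ePart w)
    (hf : fPart v = fPart w) : v = w := by
  ext (k : Fin (4 + 4))
  induction k using Fin.addCases with
  | left i => exact congr_fun he i
  | right i => simpa [fPart_apply, Fin.rev_castAdd] using congr_fun hf i.rev

def crossPairing : (Fin 8 → F) →ₗ[F] (Fin 8 → F) →ₗ[F] F :=
  (dotProductBilin F F).compl₁₂ ePart fPart

lemma crossPairing_apply (v w : Fin 8 → F) : crossPairing v w = ePart v ⬝ᵥ fPart w := rfl

lemma B8_eq_crossPairing_add (v w : Fin 8 → F) :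
    B8 F v w = crossPairing v w + crossPairing w v := by
  rw [B8, Ip_mulVec, crossPairing_apply, crossPairing_apply, dotProduct,
    Fin.sum_univ_add (a := 4) (b := 4)]
  congr 1
  refine Fintype.sum_equiv Fin.revPerm _ _ fun i => ?_
  simp [ePart_apply, fPart_apply, Fin.rev_addNat, Fin.rev_castAdd, mul_comm]

lemma crossPairing_self_eq_zero (h2 : (2 : F) ≠ 0) {S : Submodule F (Fin 8 → F)}
    (hS : TotallyIsotropic F S) {v : Fin 8 → F} (hv : v ∈ S) : crossPairing v v = 0 := by
  have h := hS v hv v hv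
  rw [B8_eq_crossPairing_add, ← two_mul] at h
  exact (mul_eq_zero.mp h).resolve_left h2

lemma crossPairing_eq_zero_of_mem_span_pair {p q v w : Fin 8 → F}
    (hpp : crossPairing p p = 0) (hpq : crossPairing p q = 0) (hqp : crossPairing q p = 0)
    (hqq : crossPairing q q = 0) (hv : v ∈ Submodule.span F {p, q})
    (hw : w ∈ Submodule.span F {p, q}) : crossPairing v w = 0 := by
  obtain ⟨a, b, rfl⟩ := Submodule.mem_span_pair.mp hv
  obtain ⟨c, d, rfl⟩ := Submodule.mem_span_pair.mp hw
  simp [hpp, hpq, hqp, hqq]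

lemma totallyIsotropic_span_pair {p q : Fin 8 → F} (hpp : crossPairing p p = 0)
    (hqq : crossPairing q q = 0) (hpq : crossPairing p q + crossPairing q p = 0) :
    TotallyIsotropic F (Submodule.span F {p, q}) := by
  intro v hv w hw
  obtain ⟨a, b, rfl⟩ := Submodule.mem_span_pair.mp hv
  obtain ⟨c, d, rfl⟩ := Submodule.mem_span_pair.mp hw
  rw [B8_eq_crossPairing_add]
  simp only [map_add, map_smul, LinearMap.add_apply, LinearMap.smul_apply, smul_eq_mul]
  linear_combination (2 * a * c) * hpp + (a * d + b * c) * hpq + (2 * b * d) * hqq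

lemma emap_castAdd_castAdd (r : Matrix (Fin 4) (Fin 4) F) (a : F) (i j : Fin 4) :
    emap F r a (Fin.castAdd 4 i) (Fin.castAdd 4 j) = r i j := by
  simp [emap]

lemma emap_castAdd_addNat (r : Matrix (Fin 4) (Fin 4) F) (a : F) (i j : Fin 4) :
    emap F r a (Fin.castAdd 4 i) (j.addNat 4) = 0 := by
  simp [emap]

lemma emap_addNat_castAdd (r : Matrix (Fin 4) (Fin 4) F) (a : F) (i j : Fin 4) :
    emap F r a (i.addNat 4) (Fin.castAdd 4 j) = 0 := by
  simp [emap]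

lemma emap_addNat_addNat (r : Matrix (Fin 4) (Fin 4) F) (a : F) (i j : Fin 4) :
    emap F r a (i.addNat 4) (j.addNat 4) = a * r⁻¹ j.rev i.rev := by
  simp [emap, Ip_mul_mul_Ip_apply]

lemma ePart_vecMul_emap (v : Fin 8 → F) (r : Matrix (Fin 4) (Fin 4) F) (a : F) :
    ePart (v ᵥ* emap F r a) = ePart v ᵥ* r := by
  ext j
  simp [ePart_apply, vecMul, dotProduct, Fin.sum_univ_add (a := 4) (b := 4),
    emap_castAdd_castAdd, emap_addNat_castAdd]

lemma fPart_vecMul_emap (v : Fin 8 → F) (r : Matrix (Fin 4) (Fin 4) F) (a : F) :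
    fPart (v ᵥ* emap F r a) = a • (r⁻¹ *ᵥ fPart v) := by
  ext j
  simp only [fPart_apply, vecMul, dotProduct, Fin.sum_univ_add (a := 4) (b := 4),
    Fin.rev_castAdd, Pi.smul_apply, mulVec, smul_eq_mul, Finset.mul_sum]
  simp [emap_castAdd_addNat, emap_addNat_addNat]
  refine Fintype.sum_equiv Fin.revPerm _ _ fun i => ?_
  simp
  ring

lemma crossPairing_vecMul_emap {r : Matrix (Fin 4) (Fin 4) F} (hr : r.det ≠ 0) (a : F)
    (v w : Fin 8 → F) :
    crossPairing (v ᵥ* emap F r a) (w ᵥ* emap F r a) = a * crossPairing v w := by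
  rw [crossPairing_apply, crossPairing_apply, ePart_vecMul_emap, fPart_vecMul_emap,
    dotProduct_smul, ← dotProduct_mulVec, mulVec_mulVec, mul_nonsing_inv r hr.isUnit,
    one_mulVec, smul_eq_mul]

lemma vecMul_emap_inv_eq {s : Matrix (Fin 4) (Fin 4) F} (hs : IsUnit s) {a : F}
    {p v : Fin 8 → F} (he : ePart v ᵥ* s = ePart p) (hf : a • (s *ᵥ fPart p) = fPart v) :
    p ᵥ* emap F s⁻¹ a = v := by
  have hdet := (isUnit_iff_isUnit_det s).mp hs
  refine eq_of_ePart_eq_of_fPart_eq ?_ ?_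
  · rw [ePart_vecMul_emap, ← he, vecMul_vecMul, mul_nonsing_inv _ hdet, vecMul_one]
  · rw [fPart_vecMul_emap, nonsing_inv_nonsing_inv _ hdet, hf]

lemma U1_eq_ker_fPart : U1 F = LinearMap.ker fPart := by
  refine le_antisymm ?_ fun v hv => ?_
  · rw [U1, Submodule.span_le]
    rintro v (rfl | rfl | rfl | rfl) <;> ext i <;> fin_cases i <;> rfl
  · have h4 : v 4 = 0 := congr_fun hv 3
    have h5 : v 5 = 0 := congr_fun hv 2
    have h6 : v 6 = 0 := congr_fun hv 1
    have h7 : v 7 = 0 := congr_fun hv 0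
    have hv : v = v 0 • e1 F + v 1 • e2 F + v 2 • e3 F + v 3 • e4 F := by
      ext k
      fin_cases k <;> simp [e1, e2, e3, e4, h4, h5, h6, h7]
    rw [hv, U1]
    refine add_mem (add_mem (add_mem ?_ ?_) ?_) ?_ <;>
      exact Submodule.smul_mem _ _ (Submodule.subset_span (by simp))

lemma U2_eq_ker_ePart : U2 F = LinearMap.ker ePart := by
  refine le_antisymm ?_ fun v hv => ?_
  · rw [U2, Submodule.span_le]
    rintro v (rfl | rfl | rfl | rfl) <;> ext i <;> fin_cases i <;> rfl
  · have h0 : v 0 = 0 := congr_fun hv 0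
    have h1 : v 1 = 0 := congr_fun hv 1
    have h2 : v 2 = 0 := congr_fun hv 2
    have h3 : v 3 = 0 := congr_fun hv 3
    have hv : v = v 7 • f1 F + v 6 • f2 F + v 5 • f3 F + v 4 • f4 F := by
      ext k
      fin_cases k <;> simp [f1, f2, f3, f4, h0, h1, h2, h3]
    rw [hv, U2]
    refine add_mem (add_mem (add_mem ?_ ?_) ?_) ?_ <;>
      exact Submodule.smul_mem _ _ (Submodule.subset_span (by simp))

def IsTransverseIsotropicPlane (S : Submodule F (Fin 8 → F)) : Prop :=
  TotallyIsotropic F S ∧ Module.finrank F S = 2 ∧ S ⊓ U1 F = ⊥ ∧ S ⊓ U2 F = ⊥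

lemma isTransverseIsotropicPlane_span_pair {p q : Fin 8 → F} (hpp : crossPairing p p = 0)
    (hqq : crossPairing q q = 0) (hpq : crossPairing p q + crossPairing q p = 0)
    (he : LinearIndependent F ![ePart p, ePart q]) (hf : LinearIndependent F ![fPart p, fPart q]) :
    IsTransverseIsotropicPlane (Submodule.span F {p, q}) := by
  have he' : LinearIndependent F (ePart ∘ ![p, q]) := by
    convert he using 1; ext i; fin_cases i <;> rfl
  have hf' : LinearIndependent F (fPart ∘ ![p, q]) := by
    convert hf using 1; ext i; fin_cases i <;> rfl
  refine ⟨totallyIsotropic_span_pair hpp hqq hpq, ?_, ?_, ?_⟩ <;>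
    rw [← Matrix.range_cons_cons_empty p q ![]]
  · rw [finrank_span_eq_card he'.of_comp]
    simp
  · rw [U1_eq_ker_fPart]
    exact disjoint_iff.mp (Submodule.range_ker_disjoint hf')
  · rw [U2_eq_ker_ePart]
    exact disjoint_iff.mp (Submodule.range_ker_disjoint he')

lemma ePart_e1_add_f3 : ePart (e1 F + f3 F) = Pi.single 0 1 := by
  ext i; fin_cases i <;> simp [ePart_apply, e1, f3]

lemma fPart_e1_add_f3 : fPart (e1 F + f3 F) = Pi.single 2 1 := by
  ext i; fin_cases i <;> simp [fPart_apply, e1, f3]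

lemma ePart_e2_add_f4 : ePart (e2 F + f4 F) = Pi.single 1 1 := by
  ext i; fin_cases i <;> simp [ePart_apply, e2, f4]

lemma fPart_e2_add_f4 : fPart (e2 F + f4 F) = Pi.single 3 1 := by
  ext i; fin_cases i <;> simp [fPart_apply, e2, f4]

lemma ePart_e1_sub_f2 : ePart (e1 F - f2 F) = Pi.single 0 1 := by
  ext i; fin_cases i <;> simp [ePart_apply, e1, f2]

lemma fPart_e1_sub_f2 : fPart (e1 F - f2 F) = -Pi.single 1 1 := by
  ext i; fin_cases i <;> simp [fPart_apply, e1, f2]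

lemma ePart_e2_add_f1 : ePart (e2 F + f1 F) = Pi.single 1 1 := by
  ext i; fin_cases i <;> simp [ePart_apply, e2, f1]

lemma fPart_e2_add_f1 : fPart (e2 F + f1 F) = Pi.single 0 1 := by
  ext i; fin_cases i <;> simp [fPart_apply, e2, f1]

lemma isTransverseIsotropicPlane_repA : IsTransverseIsotropicPlane (repA F) := by
  refine isTransverseIsotropicPlane_span_pair ?_ ?_ ?_ ?_ ?_ <;>
    simp only [crossPairing_apply, ePart_e1_add_f3, fPart_e1_add_f3, ePart_e2_add_f4,
      fPart_e2_add_f4]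
  iterate 3 simp
  all_goals exact linearIndependent_pair_single (by decide) one_ne_zero one_ne_zero

lemma isTransverseIsotropicPlane_repB : IsTransverseIsotropicPlane (repB F) := by
  refine isTransverseIsotropicPlane_span_pair ?_ ?_ ?_ ?_ ?_ <;>
    simp only [crossPairing_apply, ePart_e1_sub_f2, fPart_e1_sub_f2, ePart_e2_add_f1,
      fPart_e2_add_f1, ← Pi.single_neg]
  iterate 3 simp
  · exact linearIndependent_pair_single (by decide) one_ne_zero one_ne_zero
  · exact linearIndependent_pair_single (by decide) (neg_ne_zero.mpr one_ne_zero) one_ne_zero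

lemma crossPairing_eq_zero_of_mem_repA {v w : Fin 8 → F} (hv : v ∈ repA F) (hw : w ∈ repA F) :
    crossPairing v w = 0 := by
  refine crossPairing_eq_zero_of_mem_span_pair ?_ ?_ ?_ ?_ hv hw <;>
    simp [crossPairing_apply, ePart_e1_add_f3, fPart_e1_add_f3, ePart_e2_add_f4, fPart_e2_add_f4,
      -map_add]

lemma sameOrbit_span_pair {p q v w : Fin 8 → F} {r : Matrix (Fin 4) (Fin 4) F} (hr : r.det ≠ 0)
    {a : F} (ha : a ≠ 0) (hp : p ᵥ* emap F r a = v) (hq : q ᵥ* emap F r a = w) :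
    SameOrbit F (Submodule.span F {p, q}) (Submodule.span F {v, w}) :=
  ⟨r, a, hr, ha, by rw [Submodule.map_span, Set.image_pair]; simp [hp, hq]⟩

/-- If `s` has columns `a, c`, then `s⁻¹` has first rows `ePart (u 0), ePart (u 1)`, so that
`e(s⁻¹, t)` moves `p, q` to `u 0, u 1`. -/
lemma sameOrbit_of_dual_frame {p q : Fin 8 → F} {u : Fin 2 → Fin 8 → F}
    {a c : Fin 2 → Fin 4 → F} (hxa : ∀ i j, ePart (u i) ⬝ᵥ a j = if i = j then 1 else 0)
    (hxc : ∀ i j, ePart (u i) ⬝ᵥ c j = 0) (hc : LinearIndependent F c) {t : F} (ht : t ≠ 0)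
    (hpe : ePart p = Pi.single 0 1) (hqe : ePart q = Pi.single 1 1)
    (hpf : t • ((Matrix.of (Fin.append a c))ᵀ *ᵥ fPart p) = fPart (u 0))
    (hqf : t • ((Matrix.of (Fin.append a c))ᵀ *ᵥ fPart q) = fPart (u 1)) :
    SameOrbit F (Submodule.span F {p, q}) (Submodule.span F {u 0, u 1}) := by
  have hs : IsUnit (Matrix.of (Fin.append a c))ᵀ :=
    linearIndependent_cols_iff_isUnit.mp (linearIndependent_append_of_dotProduct hxa hxc hc)
  have he := vecMul_transpose_append_eq_single (m := 2) (n := 2) (x := fun i => ePart (u i))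
    hxa hxc
  have hdet : (Matrix.of (Fin.append a c))ᵀ⁻¹.det ≠ 0 :=
    (isUnit_nonsing_inv_det _ ((isUnit_iff_isUnit_det _).mp hs)).ne_zero
  exact sameOrbit_span_pair hdet ht (vecMul_emap_inv_eq hs ((he 0).trans hpe.symm) hpf)
    (vecMul_emap_inv_eq hs ((he 1).trans hqe.symm) hqf)

lemma sameOrbit_repA_of_crossPairing_eq_zero {u : Fin 2 → Fin 8 → F}
    (hx : LinearIndependent F (ePart ∘ u)) (hc : LinearIndependent F (fPart ∘ u))
    (h0 : ∀ i j, crossPairing (u i) (u j) = 0) :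
    SameOrbit F (repA F) (Submodule.span F {u 0, u 1}) := by
  obtain ⟨a, -, hxa, -, -⟩ := exists_dual_and_annihilator (n := 2) hx
  refine sameOrbit_of_dual_frame (c := fPart ∘ u) hxa h0 hc one_ne_zero ePart_e1_add_f3
    ePart_e2_add_f4 ?_ ?_
  · rw [fPart_e1_add_f3, one_smul, mulVec_single_one]
    rfl
  · rw [fPart_e2_add_f4, one_smul, mulVec_single_one]
    rfl

lemma sameOrbit_repB_of_crossPairing_ne_zero {u : Fin 2 → Fin 8 → F}
    (hx : LinearIndependent F (ePart ∘ u)) (hdiag : ∀ i, crossPairing (u i) (u i) = 0)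
    (hanti : crossPairing (u 1) (u 0) = -crossPairing (u 0) (u 1))
    (hb : crossPairing (u 0) (u 1) ≠ 0) :
    SameOrbit F (repB F) (Submodule.span F {u 0, u 1}) := by
  set b := crossPairing (u 0) (u 1)
  obtain ⟨-, c, -, hxc, hc⟩ := exists_dual_and_annihilator (n := 2) hx
  have hxa : ∀ i j, ePart (u i) ⬝ᵥ ![b⁻¹ • fPart (u 1), -b⁻¹ • fPart (u 0)] j =
      if i = j then 1 else 0 := by
    intro i j
    fin_cases i <;> fin_cases j <;> simp [← crossPairing_apply, hdiag, hanti, hb, b]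
  refine sameOrbit_of_dual_frame hxa hxc hc hb ePart_e1_sub_f2 ePart_e2_add_f1 ?_ ?_
  · rw [fPart_e1_sub_f2, mulVec_neg, mulVec_single_one]
    show b • -(-b⁻¹ • fPart (u 0)) = fPart (u 0)
    rw [neg_smul, neg_neg, smul_smul, mul_inv_cancel₀ hb, one_smul]
  · rw [fPart_e2_add_f1, mulVec_single_one]
    show b • b⁻¹ • fPart (u 1) = fPart (u 1)
    rw [smul_smul, mul_inv_cancel₀ hb, one_smul]

lemma sameOrbit_of_isTransverseIsotropicPlane (h2 : (2 : F) ≠ 0) {S : Submodule F (Fin 8 → F)}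
    (hS : IsTransverseIsotropicPlane S) : SameOrbit F (repA F) S ∨ SameOrbit F (repB F) S := by
  obtain ⟨hiso, hrk, hU1, hU2⟩ := hS
  obtain ⟨u, hu, hspan⟩ := exists_linearIndependent_span_range_eq hrk
  have hmem (i : Fin 2) : u i ∈ S := hspan ▸ Submodule.subset_span (Set.mem_range_self i)
  have hx : LinearIndependent F (ePart ∘ u) :=
    hu.map (by rw [hspan, ← U2_eq_ker_ePart]; exact disjoint_iff.mpr hU2)
  have hc : LinearIndependent F (fPart ∘ u) :=
    hu.map (by rw [hspan, ← U1_eq_ker_fPart]; exact disjoint_iff.mpr hU1)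
  have hdiag (i : Fin 2) := crossPairing_self_eq_zero h2 hiso (hmem i)
  have hanti : crossPairing (u 1) (u 0) = -crossPairing (u 0) (u 1) := by
    have h := hiso _ (hmem 0) _ (hmem 1)
    rw [B8_eq_crossPairing_add] at h
    linear_combination h
  have hS : Submodule.span F {u 0, u 1} = S := by
    rw [← hspan]
    congr
    ext
    simp [Fin.exists_fin_two, eq_comm]
  rw [← hS]
  by_cases hb : crossPairing (u 0) (u 1) = 0
  · refine Or.inl (sameOrbit_repA_of_crossPairing_eq_zero hx hc fun i j => ?_)
    fin_cases i <;> fin_cases j <;> simp [hdiag, hb, hanti]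
  · exact Or.inr (sameOrbit_repB_of_crossPairing_ne_zero hx hdiag hanti hb)

lemma not_sameOrbit_repA_repB : ¬ SameOrbit F (repA F) (repB F) := by
  rintro ⟨r, a, hr, -, hmap⟩
  obtain ⟨v, hv, hvp⟩ : e1 F - f2 F ∈ (repA F).map (vecMulLinear (emap F r a)) :=
    hmap ▸ Submodule.subset_span (by simp)
  obtain ⟨w, hw, hwq⟩ : e2 F + f1 F ∈ (repA F).map (vecMulLinear (emap F r a)) :=
    hmap ▸ Submodule.subset_span (by simp)
  have h := crossPairing_vecMul_emap hr a v w
  rw [← vecMulLinear_apply, hvp, ← vecMulLinear_apply, hwq,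
    crossPairing_eq_zero_of_mem_repA hv hw, mul_zero] at h
  simp [crossPairing_apply, ePart_e1_sub_f2, fPart_e2_add_f1, -map_add, -map_sub] at h

end

theorem statement7 (h2 : (2 : F) ≠ 0) :
    (TotallyIsotropic F (repA F) ∧ Module.finrank F ↥(repA F) = 2 ∧
      repA F ⊓ U1 F = ⊥ ∧ repA F ⊓ U2 F = ⊥) ∧
    (TotallyIsotropic F (repB F) ∧ Module.finrank F ↥(repB F) = 2 ∧
      repB F ⊓ U1 F = ⊥ ∧ repB F ⊓ U2 F = ⊥) ∧
    (∀ S : Submodule F (Fin 8 → F),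
        TotallyIsotropic F S → Module.finrank F ↥S = 2 →
        S ⊓ U1 F = ⊥ → S ⊓ U2 F = ⊥ →
        SameOrbit F (repA F) S ∨ SameOrbit F (repB F) S) ∧
    ¬ SameOrbit F (repA F) (repB F) :=
  ⟨isTransverseIsotropicPlane_repA, isTransverseIsotropicPlane_repB,
    fun _ hiso hrk hU1 hU2 => sameOrbit_of_isTransverseIsotropicPlane h2 ⟨hiso, hrk, hU1, hU2⟩,
    not_sameOrbit_repA_repB⟩
end

section
/- The stabilizer in GL_4(F) × F^× of the 2-dimensional totally isotropic subspace span{e_1−f_2, e_2+f_1} ⊆ F^8 (for the right action via e) equals exactly the set {(diag(g_1,g_2), det(g_1)) : g_1, g_2 ∈ GL_2(F)}, where diag(g_1,g_2) denotes the block-diagonal 4×4 matrix with g_1 in rows and columns 1–2 and g_2 in rows and columns 3–4. -/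
/-!
Write `R` for `r` in `2 + 2` block form. Since `e` is a homomorphism, `e(r, a)` is invertible,
so it stabilises `W = span{e₁ - f₂, e₂ + f₁}` as soon as it maps both generators into `W`.
In coordinates this says: the upper-right block of `R` and the lower-left block of `R⁻¹` vanish,
and `a` times the upper-left block of `R⁻¹` is the adjugate of the upper-left block `A` of `R`.
The two vanishing blocks force `R` to be block diagonal with `(R⁻¹)₁₁ = A⁻¹`, and then
`a • A⁻¹ = adj A = det A • A⁻¹` gives `a = det A`.
-/

open Matrix

variable (F : Type*) [Field F]

/-- The block-diagonal 4×4 matrix with `g₁` in rows/columns 1–2 and `g₂` in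
rows/columns 3–4. -/
def blockDiag2 (g₁ g₂ : Matrix (Fin 2) (Fin 2) F) : Matrix (Fin 4) (Fin 4) F :=
  !![g₁ 0 0, g₁ 0 1, 0, 0;
     g₁ 1 0, g₁ 1 1, 0, 0;
     0, 0, g₂ 0 0, g₂ 0 1;
     0, 0, g₂ 1 0, g₂ 1 1]

section
open Submodule Module
variable {K V : Type*} [DivisionRing K] [AddCommGroup V] [Module K V] [FiniteDimensional K V]

theorem Submodule.map_eq_self_of_map_le {f : V →ₗ[K] V} (hf : Function.Injective f)
    {W : Submodule K V} (h : W.map f ≤ W) : W.map f = W :=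
  eq_of_le_of_finrank_eq h (LinearEquiv.finrank_eq (W.equivMapOfInjective f hf)).symm

theorem Submodule.map_span_eq_self_iff {f : V →ₗ[K] V} (hf : Function.Injective f) (s : Set V) :
    (span K s).map f = span K s ↔ ∀ x ∈ s, f x ∈ span K s := by
  refine ⟨fun h x hx => h ▸ mem_map_of_mem (subset_span hx), fun h => map_eq_self_of_map_le hf ?_⟩
  rw [map_span, span_le]
  rintro _ ⟨x, hx, rfl⟩
  exact h x hx

end

namespace Matrix

variable {m n R : Type*} [Fintype m] [Fintype n] [DecidableEq m] [DecidableEq n] [CommRing R]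

theorem adjugate_eq_det_smul_inv {A : Matrix n n R} (hA : IsUnit A.det) :
    A.adjugate = A.det • A⁻¹ := by
  rw [inv_def, smul_smul, Ring.mul_inverse_cancel _ hA, one_smul]

theorem smul_inv_eq_adjugate_iff {K : Type*} [Field K] [Nonempty n] {A : Matrix n n K}
    (hA : IsUnit A.det) {a : K} : a • A⁻¹ = A.adjugate ↔ a = A.det := by
  rw [adjugate_eq_det_smul_inv hA]
  exact (smul_left_injective K
    ((isUnit_iff_isUnit_det _).2 (isUnit_nonsing_inv_det_iff.2 hA)).ne_zero).eq_iff

theorem toBlocks₂₁_eq_zero_of_inv {M : Matrix (m ⊕ n) (m ⊕ n) R} (hM : IsUnit M)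
    (h₁₂ : M.toBlocks₁₂ = 0) (h₂₁ : M⁻¹.toBlocks₂₁ = 0) :
    M.toBlocks₂₁ = 0 ∧ M⁻¹.toBlocks₁₁ = M.toBlocks₁₁⁻¹ := by
  have hprod : fromBlocks M.toBlocks₁₁ 0 M.toBlocks₂₁ M.toBlocks₂₂ *
      fromBlocks M⁻¹.toBlocks₁₁ M⁻¹.toBlocks₁₂ 0 M⁻¹.toBlocks₂₂ = 1 := by
    rw [← h₁₂, ← h₂₁, fromBlocks_toBlocks, fromBlocks_toBlocks]
    exact mul_nonsing_inv M ((isUnit_iff_isUnit_det M).1 hM)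
  rw [fromBlocks_multiply, ← fromBlocks_one, fromBlocks_inj] at hprod
  obtain ⟨h₁₁, -, hC, -⟩ := hprod
  simp only [Matrix.mul_zero, add_zero] at h₁₁ hC
  refine ⟨?_, (inv_eq_right_inv h₁₁).symm⟩
  calc M.toBlocks₂₁ = M.toBlocks₂₁ * (M⁻¹.toBlocks₁₁ * M.toBlocks₁₁) := by
        rw [mul_eq_one_comm.1 h₁₁, Matrix.mul_one]
    _ = 0 := by rw [← Matrix.mul_assoc, hC, Matrix.zero_mul]

end Matrix

local notation "σ₄" => (Equiv.symm (finSumFinEquiv : Fin 2 ⊕ Fin 2 ≃ Fin 4))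

section
variable {F}

theorem Ip_eq_submatrix (n : ℕ) :
    Ip F n = (1 : Matrix (Fin n) (Fin n) F).submatrix id Fin.rev := by
  ext i j
  simp only [Ip, of_apply, submatrix_apply, id, one_apply, Fin.ext_iff, Fin.val_rev]
  congr 1
  apply propext
  omega

theorem Ip_mul_mul_Ip {n : ℕ} (X : Matrix (Fin n) (Fin n) F) :
    Ip F n * X * Ip F n = X.submatrix Fin.rev Fin.rev := by
  ext i j
  simp [Ip_eq_submatrix, mul_apply, one_apply, eq_comm (a := i), Fin.rev_eq_iff]

theorem Ip_mul_Ip (n : ℕ) : Ip F n * Ip F n = 1 := by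
  simpa [submatrix_one _ Fin.rev_injective] using Ip_mul_mul_Ip (1 : Matrix (Fin n) (Fin n) F)

theorem emap_eq_submatrix_fromBlocks (r : Matrix (Fin 4) (Fin 4) F) (a : F) :
    emap F r a = (fromBlocks r 0 0 (a • (Ip F 4 * r⁻¹ᵀ * Ip F 4))).submatrix
      finSumFinEquiv.symm finSumFinEquiv.symm := by
  have inl (k : Fin 4) : (finSumFinEquiv (m := 4) (n := 4) (Sum.inl k) : ℕ) = k := rfl
  have inr (k : Fin 4) : (finSumFinEquiv (m := 4) (n := 4) (Sum.inr k) : ℕ) = 4 + k := rfl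
  ext i j
  obtain ⟨k | k, rfl⟩ := (finSumFinEquiv (m := 4) (n := 4)).surjective i <;>
  obtain ⟨l | l, rfl⟩ := (finSumFinEquiv (m := 4) (n := 4)).surjective j <;>
    simp [emap, inl, inr]

theorem emap_mul (r s : Matrix (Fin 4) (Fin 4) F) (a b : F) :
    emap F r a * emap F s b = emap F (r * s) (a * b) := by
  have hconj : (a • (Ip F 4 * r⁻¹ᵀ * Ip F 4)) * (b • (Ip F 4 * s⁻¹ᵀ * Ip F 4)) =
      (a * b) • (Ip F 4 * (r * s)⁻¹ᵀ * Ip F 4) := by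
    rw [Matrix.mul_inv_rev, transpose_mul, smul_mul_smul_comm]
    simp only [Matrix.mul_assoc, ← Matrix.mul_assoc (Ip F 4) (Ip F 4), Ip_mul_Ip, Matrix.one_mul]
  simp only [emap_eq_submatrix_fromBlocks, submatrix_mul_equiv, fromBlocks_multiply, hconj]
  simp

theorem emap_one : emap F 1 1 = 1 := by
  simp [emap_eq_submatrix_fromBlocks, Ip_mul_Ip]

theorem isUnit_emap {r : Matrix (Fin 4) (Fin 4) F} (hr : IsUnit r) {a : F} (ha : a ≠ 0) :
    IsUnit (emap F r a) :=
  .of_mul_eq_one (emap F r⁻¹ a⁻¹) <| by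
    rw [emap_mul, mul_nonsing_inv _ ((isUnit_iff_isUnit_det r).1 hr), mul_inv_cancel₀ ha, emap_one]

theorem vecMul_emap_e1_sub_f2 (r : Matrix (Fin 4) (Fin 4) F) (a : F) :
    (e1 F - f2 F) ᵥ* emap F r a =
      ![r 0 0, r 0 1, r 0 2, r 0 3,
        -(a * r⁻¹ 3 1), -(a * r⁻¹ 2 1), -(a * r⁻¹ 1 1), -(a * r⁻¹ 0 1)] := by
  ext j
  fin_cases j <;>
    simp [e1, f2, emap, Ip_mul_mul_Ip, Pi.single_apply, vecMul, dotProduct, Fin.sum_univ_eight]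

theorem vecMul_emap_e2_add_f1 (r : Matrix (Fin 4) (Fin 4) F) (a : F) :
    (e2 F + f1 F) ᵥ* emap F r a =
      ![r 1 0, r 1 1, r 1 2, r 1 3, a * r⁻¹ 3 0, a * r⁻¹ 2 0, a * r⁻¹ 1 0, a * r⁻¹ 0 0] := by
  ext j
  fin_cases j <;>
    simp [e2, f1, emap, Ip_mul_mul_Ip, Pi.single_apply, vecMul, dotProduct, Fin.sum_univ_eight]

theorem mem_repB_iff (v : Fin 8 → F) :
    v ∈ repB F ↔ v 2 = 0 ∧ v 3 = 0 ∧ v 4 = 0 ∧ v 5 = 0 ∧ v 6 = -v 0 ∧ v 7 = v 1 := by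
  rw [repB, Submodule.mem_span_pair]
  constructor
  · rintro ⟨x, y, rfl⟩
    simp [e1, e2, f1, f2]
  · rintro ⟨h2, h3, h4, h5, h6, h7⟩
    refine ⟨v 0, v 1, funext fun j => ?_⟩
    fin_cases j <;> simp [e1, e2, f1, f2, *]

theorem map_emap_repB_eq_iff_toBlocks {r : Matrix (Fin 4) (Fin 4) F} (hr : IsUnit r) {a : F}
    (ha : a ≠ 0) :
    (repB F).map (emap F r a).vecMulLinear = repB F ↔
      (reindex σ₄ σ₄ r).toBlocks₁₂ = 0 ∧ (reindex σ₄ σ₄ r⁻¹).toBlocks₂₁ = 0 ∧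
        a • (reindex σ₄ σ₄ r⁻¹).toBlocks₁₁ = (reindex σ₄ σ₄ r).toBlocks₁₁.adjugate := by
  have h0 : (finSumFinEquiv : Fin 2 ⊕ Fin 2 ≃ Fin 4) (Sum.inl 0) = 0 := rfl
  have h1 : (finSumFinEquiv : Fin 2 ⊕ Fin 2 ≃ Fin 4) (Sum.inl 1) = 1 := rfl
  have h2 : (finSumFinEquiv : Fin 2 ⊕ Fin 2 ≃ Fin 4) (Sum.inr 0) = 2 := rfl
  have h3 : (finSumFinEquiv : Fin 2 ⊕ Fin 2 ≃ Fin 4) (Sum.inr 1) = 3 := rfl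
  rw [repB, Submodule.map_span_eq_self_iff (vecMul_injective_iff_isUnit.2 (isUnit_emap hr ha)),
    ← repB]
  simp only [Set.forall_mem_insert, Set.mem_singleton_iff, forall_eq, vecMulLinear_apply,
    vecMul_emap_e1_sub_f2, vecMul_emap_e2_add_f1, mem_repB_iff]
  simp [← Matrix.ext_iff, funext_iff, Fin.forall_fin_two, adjugate_fin_two, toBlocks₁₂,
    toBlocks₂₁, toBlocks₁₁, ha, h0, h1, h2, h3, neg_eq_iff_eq_neg]
  constructor
  · rintro ⟨⟨a1, a2, a3, a4, a5, a6⟩, b1, b2, b3, b4, b5, b6⟩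
    exact ⟨⟨⟨a1, a2⟩, b1, b2⟩, ⟨⟨b4, a4⟩, b3, a3⟩, ⟨b6, a6⟩, b5, a5⟩
  · rintro ⟨⟨⟨a1, a2⟩, b1, b2⟩, ⟨⟨b4, a4⟩, b3, a3⟩, ⟨b6, a6⟩, b5, a5⟩
    exact ⟨⟨a1, a2, a3, a4, a5, a6⟩, b1, b2, b3, b4, b5, b6⟩

theorem reindex_blockDiag2 (g₁ g₂ : Matrix (Fin 2) (Fin 2) F) :
    reindex σ₄ σ₄ (blockDiag2 F g₁ g₂) = fromBlocks g₁ 0 0 g₂ := by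
  ext (i | i) (j | j) <;> fin_cases i <;> fin_cases j <;> rfl

theorem det_blockDiag2 (g₁ g₂ : Matrix (Fin 2) (Fin 2) F) :
    (blockDiag2 F g₁ g₂).det = g₁.det * g₂.det := by
  rw [← det_reindex_self σ₄, reindex_blockDiag2, det_fromBlocks_zero₂₁]

theorem map_emap_repB_eq_iff {r : Matrix (Fin 4) (Fin 4) F} (hr : IsUnit r) {a : F} (ha : a ≠ 0) :
    (repB F).map (emap F r a).vecMulLinear = repB F ↔
      ∃ g₁ g₂ : Matrix (Fin 2) (Fin 2) F, r = blockDiag2 F g₁ g₂ ∧ a = g₁.det := by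
  rw [map_emap_repB_eq_iff_toBlocks hr ha, ← inv_reindex]
  have hR : IsUnit (reindex σ₄ σ₄ r) := by
    rwa [isUnit_iff_isUnit_det, det_reindex_self, ← isUnit_iff_isUnit_det]
  constructor
  · rintro ⟨h₁₂, h₂₁, hadj⟩
    set R := reindex σ₄ σ₄ r
    obtain ⟨h₂₁', hinv⟩ := toBlocks₂₁_eq_zero_of_inv hR h₁₂ h₂₁
    have hblocks : R = fromBlocks R.toBlocks₁₁ 0 0 R.toBlocks₂₂ := by
      conv_lhs => rw [← fromBlocks_toBlocks R, h₁₂, h₂₁']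
    have hA : IsUnit R.toBlocks₁₁.det :=
      (isUnit_iff_isUnit_det _).1 (isUnit_fromBlocks_zero₁₂.1 (hblocks ▸ hR)).1
    rw [hinv, smul_inv_eq_adjugate_iff hA] at hadj
    refine ⟨R.toBlocks₁₁, R.toBlocks₂₂, (reindex σ₄ σ₄).injective ?_, hadj⟩
    rw [reindex_blockDiag2, ← hblocks]
  · rintro ⟨g₁, g₂, rfl, rfl⟩
    rw [reindex_blockDiag2] at hR ⊢
    obtain ⟨hg₁, hg₂⟩ := isUnit_fromBlocks_zero₁₂.1 hR
    rw [inv_fromBlocks_zero₁₂_of_isUnit_iff _ _ _ (iff_of_true hg₁ hg₂)]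
    simp [smul_inv_eq_adjugate_iff ((isUnit_iff_isUnit_det _).1 hg₁)]

end

theorem statement8 :
    {p : Matrix (Fin 4) (Fin 4) F × F |
        p.1.det ≠ 0 ∧ p.2 ≠ 0 ∧
        Submodule.map (Matrix.vecMulLinear (emap F p.1 p.2)) (repB F) = repB F} =
    {p : Matrix (Fin 4) (Fin 4) F × F |
        ∃ g₁ g₂ : Matrix (Fin 2) (Fin 2) F,
          g₁.det ≠ 0 ∧ g₂.det ≠ 0 ∧ p = (blockDiag2 F g₁ g₂, g₁.det)} := by
  ext ⟨r, a⟩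
  simp only [Set.mem_ofPred_eq, Prod.mk.injEq]
  constructor
  · rintro ⟨hr, ha, hstab⟩
    obtain ⟨g₁, g₂, rfl, rfl⟩ :=
      (map_emap_repB_eq_iff ((isUnit_iff_isUnit_det r).2 hr.isUnit) ha).1 hstab
    rw [det_blockDiag2] at hr
    exact ⟨g₁, g₂, ha, right_ne_zero_of_mul hr, rfl, rfl⟩
  · rintro ⟨g₁, g₂, hg₁, hg₂, rfl, rfl⟩
    have hdet : (blockDiag2 F g₁ g₂).det ≠ 0 := by
      rw [det_blockDiag2]
      exact mul_ne_zero hg₁ hg₂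
    exact ⟨hdet, hg₁,
      (map_emap_repB_eq_iff ((isUnit_iff_isUnit_det _).2 hdet.isUnit) hg₁).2 ⟨g₁, g₂, rfl, rfl⟩⟩
end
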